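/- arXiv:2506.07272 — 3 statements merged into one kernel-verified Lean document; each statement's English description precedes it below -/
import Mathlib

section
/- Let μ be a probability distribution on ℝ with continuous CDF F_μ, and let X₁,…,Xₙ, T be i.i.d. samples from μ. Let F_X be the empirical CDF of {X₁,…,Xₙ}. Then E[(F_X(T) − F_μ(T))²] = 1/(6n). -/
open MeasureTheory ProbabilityTheory Set


lemma cvm_map_uniform (μ : Measure ℝ) [IsProbabilityMeasure μ]
    (hcont : Continuous fun t => (μ (Set.Iic t)).toReal) :
    Measure.map (fun t => (μ (Set.Iic t)).toReal) μ = volume.restrict (Set.Icc 0 1) := by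
  set F : ℝ → ℝ := fun t => (μ (Set.Iic t)).toReal with hF
  have hFm : Measurable F := hcont.measurable
  have hmono : Monotone F := fun a b hab =>
    ENNReal.toReal_mono (measure_ne_top _ _) (measure_mono (Iic_subset_Iic.2 hab))
  have hF0 : ∀ t, 0 ≤ F t := fun t => ENNReal.toReal_nonneg
  have hF1 : ∀ t, F t ≤ 1 := fun t => by
    have := prob_le_one (μ := μ) (s := Iic t)
    simpa [hF] using ENNReal.toReal_mono (by simp) this
  have hcdfF : (fun x => (cdf μ) x) = F := funext fun x => cdf_eq_real μ x
  have htop : Filter.Tendsto F Filter.atTop (nhds 1) := by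
    rw [← hcdfF]; exact tendsto_cdf_atTop μ
  have hbot : Filter.Tendsto F Filter.atBot (nhds 0) := by
    rw [← hcdfF]; exact tendsto_cdf_atBot μ
  haveI : IsProbabilityMeasure (Measure.map F μ) :=
    Measure.isProbabilityMeasure_map hFm.aemeasurable
  refine MeasureTheory.Measure.ext_of_Iic _ _ (fun u => ?_)
  rw [Measure.map_apply hFm measurableSet_Iic]
  rcases lt_or_ge u 0 with hu | hu
  · have h1 : F ⁻¹' Iic u = ∅ := by
      ext t; simp only [mem_preimage, mem_Iic, mem_empty_iff_false, iff_false, not_le]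
      exact lt_of_lt_of_le hu (hF0 t)
    have h2 : Iic u ∩ Icc (0:ℝ) 1 = ∅ := by
      ext x; simp only [mem_inter_iff, mem_Iic, mem_Icc, mem_empty_iff_false, iff_false]
      rintro ⟨h1', h2', _⟩; linarith
    rw [h1, Measure.restrict_apply measurableSet_Iic, h2]; simp
  rcases le_or_gt 1 u with hu1 | hu1
  · have h1 : F ⁻¹' Iic u = univ := by
      ext t; simp only [mem_preimage, mem_Iic, mem_univ, iff_true]
      exact (hF1 t).trans hu1
    have h2 : Iic u ∩ Icc (0:ℝ) 1 = Icc 0 1 := by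
      rw [inter_eq_right]; intro x hx; exact hx.2.trans hu1
    rw [h1, Measure.restrict_apply measurableSet_Iic, h2]
    simp [Real.volume_Icc]
  · -- 0 ≤ u < 1
    have hRHS : volume.restrict (Icc (0:ℝ) 1) (Iic u) = ENNReal.ofReal u := by
      rw [Measure.restrict_apply measurableSet_Iic]
      have : Iic u ∩ Icc (0:ℝ) 1 = Icc 0 u := by
        ext x; simp only [mem_inter_iff, mem_Iic, mem_Icc]
        constructor
        · rintro ⟨h1', h2', h3'⟩; exact ⟨h2', h1'⟩
        · rintro ⟨h1', h2'⟩; exact ⟨h2', h1', h2'.trans hu1.le⟩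
      rw [this, Real.volume_Icc]; simp
    rw [hRHS]
    set A : Set ℝ := F ⁻¹' Iic u with hA
    have hbdd : ∃ b, ∀ t ∈ A, t ≤ b := by
      obtain ⟨b, hb⟩ := (htop.eventually (eventually_gt_nhds hu1)).exists
      exact ⟨b, fun t ht => by
        by_contra hc
        exact absurd (le_trans (hmono (le_of_not_ge hc)) ht) (not_le.2 hb)⟩
    rcases eq_empty_or_nonempty A with hAe | hAne
    · -- A empty forces u ≤ 0, so u = 0
      have hu0 : u = 0 := by
        refine le_antisymm ?_ hu
        by_contra hc
        push_neg at hc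
        obtain ⟨a, ha⟩ := (hbot.eventually (eventually_lt_nhds hc)).exists
        exact absurd (mem_preimage.2 (mem_Iic.2 ha.le)) (by rw [← hA] at *; simp [hAe])
      rw [hAe, hu0]; simp
    · obtain ⟨b, hb⟩ := hbdd
      have hclosed : IsClosed A := IsClosed.preimage hcont isClosed_Iic
      have hsup_mem : sSup A ∈ A := hclosed.csSup_mem hAne ⟨b, fun t ht => hb t ht⟩
      set t₀ := sSup A with ht₀
      have hAeq : A = Iic t₀ := by
        ext t
        constructor
        · intro ht; exact le_csSup ⟨b, fun s hs => hb s hs⟩ ht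
        · intro ht; exact mem_preimage.2 (mem_Iic.2 ((hmono ht).trans hsup_mem))
      have hFt₀ : F t₀ = u := by
        refine le_antisymm hsup_mem ?_
        by_contra hc
        push_neg at hc
        have hev : ∀ᶠ s in nhds t₀, F s < u :=
          hcont.continuousAt.eventually (eventually_lt_nhds hc)
        have h2 : ∀ᶠ s in nhdsWithin t₀ (Ioi t₀), F s < u ∧ t₀ < s :=
          (hev.filter_mono nhdsWithin_le_nhds).and (eventually_mem_nhdsWithin)
        obtain ⟨s, hs1, hs2⟩ := h2.exists
        have : s ∈ A := mem_preimage.2 (mem_Iic.2 hs1.le)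
        have : s ≤ t₀ := le_csSup ⟨b, fun r hr => hb r hr⟩ this
        exact absurd hs2 (not_lt.2 this)
      rw [hAeq]
      have : μ (Iic t₀) = ENNReal.ofReal (F t₀) := by
        simp [hF, ENNReal.ofReal_toReal (measure_ne_top _ _)]
      rw [this, hFt₀]

lemma cvm_moment (μ : Measure ℝ) [IsProbabilityMeasure μ]
    (hcont : Continuous fun t => (μ (Set.Iic t)).toReal) (k : ℕ) :
    ∫ t, ((μ (Set.Iic t)).toReal) ^ k ∂μ = 1 / (k + 1) := by
  set F : ℝ → ℝ := fun t => (μ (Set.Iic t)).toReal with hF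
  have hFm : Measurable F := hcont.measurable
  have h1 : ∫ t, F t ^ k ∂μ = ∫ u, u ^ k ∂(Measure.map F μ) := by
    rw [integral_map hFm.aemeasurable (by fun_prop)]
  rw [h1, cvm_map_uniform μ hcont]
  rw [show (volume.restrict (Set.Icc (0:ℝ) 1)) = (volume.restrict (Set.Ioc (0:ℝ) 1)) from ?_]
  · rw [← intervalIntegral.integral_of_le zero_le_one, integral_pow]
    ring
  · rw [restrict_Ioc_eq_restrict_Icc]

lemma cvm_int_bdd {α : Type*} [MeasurableSpace α] (ν : Measure α) [IsFiniteMeasure ν]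
    {f : α → ℝ} (hf : Measurable f) (C : ℝ) (h : ∀ x, |f x| ≤ C) : Integrable f ν :=
  (integrable_const C).mono' hf.aestronglyMeasurable (Filter.Eventually.of_forall h)

lemma cvm_ind (μ : Measure ℝ) [IsProbabilityMeasure μ] (t : ℝ) :
    ∫ x, (if x ≤ t then (1:ℝ) else 0) ∂μ = (μ (Set.Iic t)).toReal := by
  rw [show (fun x => if x ≤ t then (1:ℝ) else 0)
      = Set.indicator (Set.Iic t) (fun _ => (1:ℝ)) from
    funext fun x => by simp [Set.indicator_apply, Set.mem_Iic]]
  rw [integral_indicator_const _ measurableSet_Iic]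
  simp
  rfl

lemma cvm_F_meas (μ : Measure ℝ) [IsProbabilityMeasure μ] :
    Measurable (fun t : ℝ => (μ (Set.Iic t)).toReal) :=
  Monotone.measurable fun a b hab =>
    ENNReal.toReal_mono (measure_ne_top _ _) (measure_mono (Set.Iic_subset_Iic.2 hab))

lemma cvm_F_bdd (μ : Measure ℝ) [IsProbabilityMeasure μ] (t : ℝ) :
    |(μ (Set.Iic t)).toReal| ≤ 1 := by
  rw [abs_of_nonneg ENNReal.toReal_nonneg]
  exact ENNReal.toReal_le_of_le_ofReal one_pos.le (by simpa using prob_le_one)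

lemma cvm_pair (μ : Measure ℝ) [IsProbabilityMeasure μ] :
    ∫ p : ℝ × ℝ, (if p.2 ≤ p.1 then (1:ℝ) else 0) ∂(μ.prod μ)
      = ∫ t, (μ (Set.Iic t)).toReal ∂μ := by
  have hg : Measurable (fun p : ℝ × ℝ => if p.2 ≤ p.1 then (1:ℝ) else 0) :=
    Measurable.ite (measurableSet_le measurable_snd measurable_fst)
      measurable_const measurable_const
  rw [integral_prod _ (cvm_int_bdd _ hg 1 (fun p => by by_cases h : p.2 ≤ p.1 <;> simp [h]))]
  exact integral_congr_ae (Filter.Eventually.of_forall fun t => cvm_ind μ t)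

lemma cvm_pair3 (μ : Measure ℝ) [IsProbabilityMeasure μ] :
    ∫ p : ℝ × ℝ, ((if p.2 ≤ p.1 then (1:ℝ) else 0) * (μ (Set.Iic p.1)).toReal) ∂(μ.prod μ)
      = ∫ t, ((μ (Set.Iic t)).toReal) ^ 2 ∂μ := by
  have hg : Measurable (fun p : ℝ × ℝ =>
      (if p.2 ≤ p.1 then (1:ℝ) else 0) * (μ (Set.Iic p.1)).toReal) :=
    (Measurable.ite (measurableSet_le measurable_snd measurable_fst)
      measurable_const measurable_const).mul ((cvm_F_meas μ).comp measurable_fst)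
  have hbd : ∀ p : ℝ × ℝ,
      |(if p.2 ≤ p.1 then (1:ℝ) else 0) * (μ (Set.Iic p.1)).toReal| ≤ 1 := by
    intro p
    rw [abs_mul]
    refine mul_le_one₀ ?_ (abs_nonneg _) (cvm_F_bdd μ _)
    by_cases h : p.2 ≤ p.1 <;> simp [h]
  rw [integral_prod _ (cvm_int_bdd _ hg 1 hbd)]
  refine integral_congr_ae (Filter.Eventually.of_forall fun t => ?_)
  simp only
  rw [integral_mul_const, cvm_ind μ t, sq]

lemma cvm_pair2 (μ : Measure ℝ) [IsProbabilityMeasure μ] :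
    ∫ p : ℝ × (ℝ × ℝ), ((if p.2.1 ≤ p.1 then (1:ℝ) else 0) * (if p.2.2 ≤ p.1 then (1:ℝ) else 0))
      ∂(μ.prod (μ.prod μ)) = ∫ t, ((μ (Set.Iic t)).toReal) ^ 2 ∂μ := by
  have hg : Measurable (fun p : ℝ × (ℝ × ℝ) =>
      (if p.2.1 ≤ p.1 then (1:ℝ) else 0) * (if p.2.2 ≤ p.1 then (1:ℝ) else 0)) := by
    refine Measurable.mul ?_ ?_
    · exact Measurable.ite (measurableSet_le (measurable_fst.comp measurable_snd) measurable_fst)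
        measurable_const measurable_const
    · exact Measurable.ite (measurableSet_le (measurable_snd.comp measurable_snd) measurable_fst)
        measurable_const measurable_const
  have hbd : ∀ p : ℝ × (ℝ × ℝ),
      |(if p.2.1 ≤ p.1 then (1:ℝ) else 0) * (if p.2.2 ≤ p.1 then (1:ℝ) else 0)| ≤ 1 := by
    intro p
    by_cases h1 : p.2.1 ≤ p.1 <;> by_cases h2 : p.2.2 ≤ p.1 <;> simp [h1, h2]
  rw [integral_prod _ (cvm_int_bdd _ hg 1 hbd)]
  refine integral_congr_ae (Filter.Eventually.of_forall fun t => ?_)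
  simp only
  rw [show ∫ q : ℝ × ℝ, (if q.1 ≤ t then (1:ℝ) else 0) * (if q.2 ≤ t then (1:ℝ) else 0)
        ∂(μ.prod μ)
      = (∫ x, (if x ≤ t then (1:ℝ) else 0) ∂μ) * ∫ y, (if y ≤ t then (1:ℝ) else 0) ∂μ from
    integral_prod_mul (fun x => if x ≤ t then (1:ℝ) else 0) (fun y => if y ≤ t then (1:ℝ) else 0)]
  rw [cvm_ind μ t, sq]


/-- One-sample Cramér–von Mises identity: if `μ` has continuous CDF,
`X₁,…,Xₙ,T` i.i.d. `μ`, and `F_X` is the empirical CDF of `X₁,…,Xₙ`, then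
`E[(F_X(T) − F_μ(T))²] = 1/(6n)`. -/
theorem one_sample_cvm_continuous {Ω : Type*} [MeasurableSpace Ω]
    (P : Measure Ω) [IsProbabilityMeasure P]
    (μ : Measure ℝ) [IsProbabilityMeasure μ]
    (hcont : Continuous fun t => (μ (Set.Iic t)).toReal)
    (n : ℕ) (hn : 0 < n)
    (Z : Fin (n + 1) → Ω → ℝ)
    (hmeas : ∀ i, Measurable (Z i))
    (hindep : iIndepFun Z P)
    (hlaw : ∀ i, Measure.map (Z i) P = μ) :
    ∫ ω, ((∑ i : Fin n, (if Z i.castSucc ω ≤ Z (Fin.last n) ω then (1:ℝ) else 0)) / n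
        - (μ (Set.Iic (Z (Fin.last n) ω))).toReal) ^ 2 ∂P = 1 / (6 * n) := by
  classical
  have hnn : (n:ℝ) ≠ 0 := Nat.cast_ne_zero.2 hn.ne'
  obtain ⟨U, hU⟩ : ∃ U : Fin n → Ω → ℝ,
      U = fun i ω => if Z i.castSucc ω ≤ Z (Fin.last n) ω then (1:ℝ) else 0 := ⟨_, rfl⟩
  obtain ⟨G, hG⟩ : ∃ G : Ω → ℝ,
      G = fun ω => (μ (Set.Iic (Z (Fin.last n) ω))).toReal := ⟨_, rfl⟩
  suffices h : ∫ ω, ((∑ i : Fin n, U i ω) / n - G ω) ^ 2 ∂P = 1 / (6 * n) by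
    simpa only [hU, hG] using h
  have hUm : ∀ i, Measurable (U i) := fun i => by
    rw [hU]
    exact Measurable.ite (measurableSet_le (hmeas _) (hmeas _))
      measurable_const measurable_const
  have hGm : Measurable G := by rw [hG]; exact (cvm_F_meas μ).comp (hmeas _)
  have hUb : ∀ i ω, |U i ω| ≤ 1 := fun i ω => by
    rw [hU]; by_cases hc : Z i.castSucc ω ≤ Z (Fin.last n) ω <;> simp [hc]
  have hGb : ∀ ω, |G ω| ≤ 1 := fun ω => by rw [hG]; exact cvm_F_bdd μ _
  have hne : ∀ i : Fin n, (Fin.last n) ≠ (i.castSucc : Fin (n+1)) :=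
    fun i => (Fin.castSucc_lt_last i).ne'
  -- joint laws
  have hmap2 : ∀ i : Fin n,
      Measure.map (fun ω => (Z (Fin.last n) ω, Z i.castSucc ω)) P = μ.prod μ := by
    intro i
    rw [(indepFun_iff_map_prod_eq_prod_map_map (hmeas _).aemeasurable
        (hmeas _).aemeasurable).mp (hindep.indepFun (hne i)), hlaw, hlaw]
  have hmap3 : ∀ i j : Fin n, i ≠ j →
      Measure.map (fun ω => (Z (Fin.last n) ω, (Z i.castSucc ω, Z j.castSucc ω))) P
        = μ.prod (μ.prod μ) := by
    intro i j hij
    have hp : IndepFun (Z (Fin.last n)) (fun ω => (Z i.castSucc ω, Z j.castSucc ω)) P :=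
      (hindep.indepFun_prodMk hmeas _ _ _ (hne i).symm (hne j).symm).symm
    rw [(indepFun_iff_map_prod_eq_prod_map_map (hmeas _).aemeasurable
        ((hmeas _).prodMk (hmeas _)).aemeasurable).mp hp, hlaw]
    rw [(indepFun_iff_map_prod_eq_prod_map_map (hmeas _).aemeasurable
        (hmeas _).aemeasurable).mp
        (hindep.indepFun (fun h => hij (Fin.castSucc_injective n h))), hlaw, hlaw]
  -- expectations
  have hE1 : ∀ i : Fin n, ∫ ω, U i ω ∂P = 1/2 := by
    intro i
    have hg : Measurable (fun p : ℝ × ℝ => if p.2 ≤ p.1 then (1:ℝ) else 0) :=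
      Measurable.ite (measurableSet_le measurable_snd measurable_fst)
        measurable_const measurable_const
    have key := integral_map (μ := P)
      (φ := fun ω => (Z (Fin.last n) ω, Z i.castSucc ω))
      ((hmeas _).prodMk (hmeas _)).aemeasurable
      (f := fun p : ℝ × ℝ => if p.2 ≤ p.1 then (1:ℝ) else 0) hg.aestronglyMeasurable
    rw [hmap2 i] at key
    have : ∫ ω, U i ω ∂P = ∫ p : ℝ × ℝ, (if p.2 ≤ p.1 then (1:ℝ) else 0) ∂(μ.prod μ) := by
      rw [key, hU]
    rw [this, cvm_pair μ]
    have h := cvm_moment μ hcont 1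
    simp only [pow_one] at h
    rw [h]; norm_num
  have hE2 : ∀ i j : Fin n, i ≠ j → ∫ ω, U i ω * U j ω ∂P = 1/3 := by
    intro i j hij
    have hg : Measurable (fun p : ℝ × (ℝ × ℝ) =>
        (if p.2.1 ≤ p.1 then (1:ℝ) else 0) * (if p.2.2 ≤ p.1 then (1:ℝ) else 0)) := by
      refine Measurable.mul ?_ ?_
      · exact Measurable.ite
          (measurableSet_le (measurable_fst.comp measurable_snd) measurable_fst)
          measurable_const measurable_const
      · exact Measurable.ite
          (measurableSet_le (measurable_snd.comp measurable_snd) measurable_fst)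
          measurable_const measurable_const
    have key := integral_map (μ := P)
      (φ := fun ω => (Z (Fin.last n) ω, (Z i.castSucc ω, Z j.castSucc ω)))
      ((hmeas _).prodMk ((hmeas _).prodMk (hmeas _))).aemeasurable
      (f := fun p : ℝ × (ℝ × ℝ) =>
        (if p.2.1 ≤ p.1 then (1:ℝ) else 0) * (if p.2.2 ≤ p.1 then (1:ℝ) else 0))
      hg.aestronglyMeasurable
    rw [hmap3 i j hij] at key
    have : ∫ ω, U i ω * U j ω ∂P
        = ∫ p : ℝ × (ℝ × ℝ),
            ((if p.2.1 ≤ p.1 then (1:ℝ) else 0) * (if p.2.2 ≤ p.1 then (1:ℝ) else 0))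
            ∂(μ.prod (μ.prod μ)) := by
      rw [key, hU]
    rw [this, cvm_pair2 μ, cvm_moment μ hcont 2]
    norm_num
  have hE3 : ∀ i : Fin n, ∫ ω, U i ω * G ω ∂P = 1/3 := by
    intro i
    have hg : Measurable (fun p : ℝ × ℝ =>
        (if p.2 ≤ p.1 then (1:ℝ) else 0) * (μ (Set.Iic p.1)).toReal) :=
      (Measurable.ite (measurableSet_le measurable_snd measurable_fst)
        measurable_const measurable_const).mul ((cvm_F_meas μ).comp measurable_fst)
    have key := integral_map (μ := P)
      (φ := fun ω => (Z (Fin.last n) ω, Z i.castSucc ω))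
      ((hmeas _).prodMk (hmeas _)).aemeasurable
      (f := fun p : ℝ × ℝ => (if p.2 ≤ p.1 then (1:ℝ) else 0) * (μ (Set.Iic p.1)).toReal)
      hg.aestronglyMeasurable
    rw [hmap2 i] at key
    have : ∫ ω, U i ω * G ω ∂P
        = ∫ p : ℝ × ℝ,
            ((if p.2 ≤ p.1 then (1:ℝ) else 0) * (μ (Set.Iic p.1)).toReal) ∂(μ.prod μ) := by
      rw [key, hU, hG]
    rw [this, cvm_pair3 μ, cvm_moment μ hcont 2]
    norm_num
  have hE4 : ∫ ω, G ω ^ 2 ∂P = 1/3 := by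
    have key := integral_map (μ := P) (φ := Z (Fin.last n)) (hmeas _).aemeasurable
      (f := fun t : ℝ => ((μ (Set.Iic t)).toReal) ^ 2)
      (((cvm_F_meas μ).pow_const 2).aestronglyMeasurable)
    rw [hlaw] at key
    have : ∫ ω, G ω ^ 2 ∂P = ∫ t, ((μ (Set.Iic t)).toReal) ^ 2 ∂μ := by rw [key, hG]
    rw [this, cvm_moment μ hcont 2]
    norm_num
  -- integrability
  have hIUU : ∀ i j, Integrable (fun ω => U i ω * U j ω) P := fun i j =>
    cvm_int_bdd P ((hUm i).mul (hUm j)) 1 (fun ω => by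
      rw [abs_mul]; exact mul_le_one₀ (hUb i ω) (abs_nonneg _) (hUb j ω))
  have hIUG : ∀ i, Integrable (fun ω => U i ω * G ω) P := fun i =>
    cvm_int_bdd P ((hUm i).mul hGm) 1 (fun ω => by
      rw [abs_mul]; exact mul_le_one₀ (hUb i ω) (abs_nonneg _) (hGb ω))
  have hIG2 : Integrable (fun ω => G ω ^ 2) P :=
    cvm_int_bdd P (hGm.pow_const 2) 1 (fun ω => by
      rw [abs_pow]; exact pow_le_one₀ (abs_nonneg _) (hGb ω))
  -- expand the square
  have expand : ∀ ω, ((∑ i : Fin n, U i ω) / n - G ω) ^ 2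
      = (n:ℝ)⁻¹ ^ 2 * (∑ i : Fin n, ∑ j : Fin n, U i ω * U j ω)
        - 2 * (n:ℝ)⁻¹ * (∑ i : Fin n, U i ω * G ω) + G ω ^ 2 := by
    intro ω
    rw [← Finset.sum_mul_sum, ← Finset.sum_mul]
    ring
  rw [integral_congr_ae (Filter.Eventually.of_forall expand)]
  have hIA : Integrable (fun ω => ∑ i : Fin n, ∑ j : Fin n, U i ω * U j ω) P :=
    integrable_finset_sum _ (fun i _ => integrable_finset_sum _ (fun j _ => hIUU i j))
  have hIB : Integrable (fun ω => ∑ i : Fin n, U i ω * G ω) P :=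
    integrable_finset_sum _ (fun i _ => hIUG i)
  have hIA' : Integrable (fun ω => (n:ℝ)⁻¹ ^ 2 * (∑ i : Fin n, ∑ j : Fin n, U i ω * U j ω)) P :=
    hIA.const_mul _
  have hIB' : Integrable (fun ω => 2 * (n:ℝ)⁻¹ * (∑ i : Fin n, U i ω * G ω)) P :=
    hIB.const_mul _
  have hID : Integrable (fun ω => (n:ℝ)⁻¹ ^ 2 * (∑ i : Fin n, ∑ j : Fin n, U i ω * U j ω)
      - 2 * (n:ℝ)⁻¹ * (∑ i : Fin n, U i ω * G ω)) P := hIA'.sub hIB'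
  rw [integral_add hID hIG2, integral_sub hIA' hIB',
    integral_const_mul, integral_const_mul, hE4]
  have hsum2 : ∫ ω, (∑ i : Fin n, ∑ j : Fin n, U i ω * U j ω) ∂P
      = (n:ℝ) ^ 2 / 3 + (n:ℝ) / 6 := by
    rw [integral_finset_sum _ (fun i _ => integrable_finset_sum _ (fun j _ => hIUU i j))]
    have hrow : ∀ i : Fin n, ∫ ω, (∑ j : Fin n, U i ω * U j ω) ∂P = (n:ℝ)/3 + 1/6 := by
      intro i
      rw [integral_finset_sum _ (fun j _ => hIUU i j)]
      have hUU : ∀ j : Fin n, ∫ ω, U i ω * U j ω ∂P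
          = (1:ℝ)/3 + (if i = j then 1/6 else 0) := by
        intro j
        by_cases h : i = j
        · subst h
          have : (fun ω => U i ω * U i ω) = U i := funext fun ω => by
            rw [hU]; by_cases hc : Z i.castSucc ω ≤ Z (Fin.last n) ω <;> simp [hc]
          rw [this, hE1 i, if_pos rfl]; norm_num
        · rw [hE2 i j h, if_neg h]; norm_num
      rw [Finset.sum_congr rfl (fun j _ => hUU j), Finset.sum_add_distrib,
        Finset.sum_const, Finset.sum_ite_eq Finset.univ i (fun _ => (1/6:ℝ))]
      simp [Finset.card_univ]
      ring
    rw [Finset.sum_congr rfl (fun i _ => hrow i), Finset.sum_const]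
    simp [Finset.card_univ]
    ring
  have hsum1 : ∫ ω, (∑ i : Fin n, U i ω * G ω) ∂P = (n:ℝ)/3 := by
    rw [integral_finset_sum _ (fun i _ => hIUG i)]
    rw [Finset.sum_congr rfl (fun i _ => hE3 i), Finset.sum_const]
    simp [Finset.card_univ]
    ring
  rw [hsum2, hsum1]
  field_simp
  ring
end

section
/- Let μ be a probability distribution on ℝ with continuous CDF, and let X₁,…,Xₙ, Y₁,…,Y_m, T be i.i.d. samples from μ. Let F_X, F_Y denote the empirical CDFs of {Xᵢ} and {Yⱼ}. Then E[(F_X(T) − F_Y(T))²] = (1/6)(1/n + 1/m). -/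
open MeasureTheory ProbabilityTheory Filter

section aux
variable {μ : Measure ℝ} [IsProbabilityMeasure μ]

lemma aux_atomless (hcont : Continuous fun t => (μ (Set.Iic t)).toReal) (t : ℝ) :
    μ {t} = 0 := by
  have key : ∀ k : ℕ, (μ {t}).toReal ≤
      (μ (Set.Iic t)).toReal - (μ (Set.Iic (t - 1/(k+1)))).toReal := by
    intro k
    have hk : (0:ℝ) < 1/(k+1) := by positivity
    have hsub : ({t} : Set ℝ) ⊆ Set.Iic t \ Set.Iic (t - 1/(k+1)) := by
      intro x hx
      rcases hx with rfl
      exact ⟨Set.mem_Iic.2 le_rfl, by simp only [Set.mem_Iic]; push_neg; linarith⟩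
    have h1 : μ {t} ≤ μ (Set.Iic t \ Set.Iic (t - 1/(k+1))) := measure_mono hsub
    have h2 : μ (Set.Iic t \ Set.Iic (t - 1/(k+1)))
        = μ (Set.Iic t) - μ (Set.Iic (t - 1/(k+1))) :=
      measure_diff (Set.Iic_subset_Iic.2 (by linarith)) measurableSet_Iic.nullMeasurableSet
        (measure_ne_top μ _)
    have h3 := ENNReal.toReal_mono (by rw [h2]; exact (tsub_le_self.trans_lt (measure_lt_top μ _)).ne) h1
    rwa [h2, ENNReal.toReal_sub_of_le (measure_mono (Set.Iic_subset_Iic.2 (by linarith)))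
      (measure_ne_top μ _)] at h3
  have h1 : Tendsto (fun k : ℕ => t - 1/(k+1)) atTop (nhds t) := by
    have := tendsto_one_div_add_atTop_nhds_zero_nat (𝕜 := ℝ)
    simpa using tendsto_const_nhds (x := t) (f := atTop).sub this
  have h2 : Tendsto (fun k : ℕ => (μ (Set.Iic (t - 1/(k+1)))).toReal) atTop
      (nhds ((μ (Set.Iic t)).toReal)) := (hcont.tendsto t).comp h1
  have hlim : Tendsto (fun k : ℕ => (μ (Set.Iic t)).toReal - (μ (Set.Iic (t - 1/(k+1)))).toReal)
      atTop (nhds 0) := by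
    simpa using (tendsto_const_nhds (x := (μ (Set.Iic t)).toReal) (f := atTop)).sub h2
  have h0 : (μ {t}).toReal ≤ 0 := ge_of_tendsto hlim (Filter.Eventually.of_forall key)
  have : (μ {t}).toReal = 0 := le_antisymm h0 ENNReal.toReal_nonneg
  exact (ENNReal.toReal_eq_zero_iff _).1 this |>.resolve_right (measure_ne_top μ _)

lemma diag_null (hatom : ∀ t : ℝ, μ {t} = 0) :
    (μ.prod μ) {p : ℝ × ℝ | p.1 = p.2} = 0 := by
  have hs : MeasurableSet {p : ℝ × ℝ | p.1 = p.2} :=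
    measurableSet_eq_fun measurable_fst measurable_snd
  rw [Measure.prod_apply hs]
  have h : ∀ x : ℝ, μ (Prod.mk x ⁻¹' {p : ℝ × ℝ | p.1 = p.2}) = 0 := by
    intro x
    have : Prod.mk x ⁻¹' {p : ℝ × ℝ | p.1 = p.2} = {x} := by
      ext y; simp [eq_comm]
    rw [this]; exact hatom x
  simp [lintegral_congr h, hatom]

lemma int_two (hatom : ∀ t : ℝ, μ {t} = 0) :
    ∫ p : ℝ × ℝ, (if p.2 ≤ p.1 then (1:ℝ) else 0) ∂(μ.prod μ) = 1/2 := by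
  set g : ℝ × ℝ → ℝ := fun p => if p.2 ≤ p.1 then 1 else 0 with hg
  have hgm : Measurable g :=
    Measurable.ite (measurableSet_le measurable_snd measurable_fst) measurable_const
      measurable_const
  have hbound : ∀ (f : ℝ × ℝ → ℝ), Measurable f → (∀ p, ‖f p‖ ≤ 1) →
      Integrable f (μ.prod μ) := fun f hf hb =>
    (integrable_const (1:ℝ)).mono' hf.aestronglyMeasurable (Filter.Eventually.of_forall hb)
  have hgi : Integrable g (μ.prod μ) :=
    hbound g hgm (fun p => by dsimp [g]; split_ifs <;> simp)
  have hgsi : Integrable (fun p => g p.swap) (μ.prod μ) :=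
    hbound _ (hgm.comp measurable_swap) (fun p => by dsimp [g]; split_ifs <;> simp)
  have hswap : ∫ p, g p.swap ∂(μ.prod μ) = ∫ p, g p ∂(μ.prod μ) := by
    conv_rhs => rw [← Measure.prod_swap]
    rw [integral_map measurable_swap.aemeasurable hgm.aestronglyMeasurable]
  have hne : ∀ᵐ p ∂(μ.prod μ), ¬ ((p : ℝ × ℝ).1 = p.2) := by
    rw [ae_iff]
    simpa using diag_null hatom
  have hsum : ∀ᵐ p ∂(μ.prod μ), g p + g p.swap = 1 := by
    filter_upwards [hne] with p hp
    dsimp [g, Prod.swap]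
    split_ifs with h1 h2 h2 <;> [exact absurd (le_antisymm h2 h1) hp;
      norm_num; norm_num; (push_neg at h1 h2; linarith)]
  have h1 : ∫ p, (g p + g p.swap) ∂(μ.prod μ) = 1 := by
    rw [integral_congr_ae hsum]; simp
  rw [integral_add hgi hgsi, hswap] at h1
  show ∫ p, g p ∂(μ.prod μ) = 1/2
  linarith


set_option maxHeartbeats 2000000 in
lemma int_three (hatom : ∀ t : ℝ, μ {t} = 0) :
    ∫ p : ℝ × (ℝ × ℝ), ((if p.2.1 ≤ p.1 then (1:ℝ) else 0) * (if p.2.2 ≤ p.1 then (1:ℝ) else 0))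
      ∂(μ.prod (μ.prod μ)) = 1/3 := by
  set μ3 : Measure (ℝ × (ℝ × ℝ)) := μ.prod (μ.prod μ) with hμ3
  set B : ℝ × (ℝ × ℝ) → ℝ := fun p =>
    (if p.2.1 ≤ p.1 then (1:ℝ) else 0) * (if p.2.2 ≤ p.1 then (1:ℝ) else 0) with hB
  set τ : ℝ × (ℝ × ℝ) → ℝ × (ℝ × ℝ) := fun p => (p.2.1, (p.1, p.2.2)) with hτ
  set σ : ℝ × (ℝ × ℝ) → ℝ × (ℝ × ℝ) := fun p => (p.2.2, (p.2.1, p.1)) with hσ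
  have hBm : Measurable B := by
    apply Measurable.mul <;>
      exact Measurable.ite (measurableSet_le (by fun_prop) (by fun_prop)) measurable_const
        measurable_const
  have hτm : Measurable τ := by fun_prop
  have hσm : Measurable σ := by fun_prop
  have hbound : ∀ (f : ℝ × (ℝ × ℝ) → ℝ), Measurable f → (∀ p, ‖f p‖ ≤ 1) →
      Integrable f μ3 := fun f hf hb =>
    (integrable_const (1:ℝ)).mono' hf.aestronglyMeasurable (Filter.Eventually.of_forall hb)
  have hBb : ∀ (g : ℝ × (ℝ × ℝ) → ℝ × (ℝ × ℝ)), ∀ p, ‖B (g p)‖ ≤ 1 := by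
    intro g p; dsimp [B]; split_ifs <;> norm_num
  have hm1 : MeasurePreserving (MeasurableEquiv.prodAssoc.symm :
      ℝ × (ℝ × ℝ) → (ℝ × ℝ) × ℝ) μ3 ((μ.prod μ).prod μ) :=
    (MeasurePreserving.symm _ ⟨MeasurableEquiv.prodAssoc.measurable, Measure.prodAssoc_prod⟩)
  have hm3 : MeasurePreserving (MeasurableEquiv.prodAssoc :
      (ℝ × ℝ) × ℝ → ℝ × (ℝ × ℝ)) ((μ.prod μ).prod μ) μ3 :=
    ⟨MeasurableEquiv.prodAssoc.measurable, Measure.prodAssoc_prod⟩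
  have hτp : MeasurePreserving τ μ3 μ3 := by
    have h2 : MeasurePreserving (Prod.map (Prod.swap : ℝ × ℝ → ℝ × ℝ) (id : ℝ → ℝ))
        ((μ.prod μ).prod μ) ((μ.prod μ).prod μ) :=
      (Measure.measurePreserving_swap).prod (MeasurePreserving.id μ)
    have := (hm3.comp h2).comp hm1
    convert this using 1
    rfl
  have hσp : MeasurePreserving σ μ3 μ3 := by
    have h2 : MeasurePreserving (Prod.swap : (ℝ × ℝ) × ℝ → ℝ × (ℝ × ℝ))
        ((μ.prod μ).prod μ) μ3 := Measure.measurePreserving_swap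
    have h3 : MeasurePreserving (Prod.map (id : ℝ → ℝ) (Prod.swap : ℝ × ℝ → ℝ × ℝ)) μ3 μ3 :=
      (MeasurePreserving.id μ).prod Measure.measurePreserving_swap
    have := (h3.comp h2).comp hm1
    convert this using 1
    rfl
  have hintτ : ∫ p, B (τ p) ∂μ3 = ∫ p, B p ∂μ3 := by
    rw [← hτp.map_eq, integral_map hτm.aemeasurable hBm.aestronglyMeasurable, hτp.map_eq]
  have hintσ : ∫ p, B (σ p) ∂μ3 = ∫ p, B p ∂μ3 := by
    rw [← hσp.map_eq, integral_map hσm.aemeasurable hBm.aestronglyMeasurable, hσp.map_eq]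
  -- a.e. the three coordinates are pairwise distinct
  have hS1 : μ3 {p : ℝ × (ℝ × ℝ) | p.1 = p.2.1} = 0 := by
    have hs : MeasurableSet {p : ℝ × (ℝ × ℝ) | p.1 = p.2.1} :=
      measurableSet_eq_fun measurable_fst (measurable_fst.comp measurable_snd)
    rw [hμ3, Measure.prod_apply hs]
    have h : ∀ x : ℝ, (μ.prod μ) {a : ℝ × ℝ | x = a.1} = 0 := by
      intro x
      have : {a : ℝ × ℝ | x = a.1} = ({x} : Set ℝ) ×ˢ Set.univ := by
        ext q; simp [Prod.ext_iff, eq_comm]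
      rw [this, Measure.prod_prod, hatom x, zero_mul]
    simp [lintegral_congr h]
  have hS2 : μ3 {p : ℝ × (ℝ × ℝ) | p.1 = p.2.2} = 0 := by
    have hs : MeasurableSet {p : ℝ × (ℝ × ℝ) | p.1 = p.2.2} :=
      measurableSet_eq_fun measurable_fst (measurable_snd.comp measurable_snd)
    rw [hμ3, Measure.prod_apply hs]
    have h : ∀ x : ℝ, (μ.prod μ) {a : ℝ × ℝ | x = a.2} = 0 := by
      intro x
      have : {a : ℝ × ℝ | x = a.2} = Set.univ ×ˢ ({x} : Set ℝ) := by
        ext q; simp [Prod.ext_iff, eq_comm]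
      rw [this, Measure.prod_prod, hatom x, mul_zero]
    simp [lintegral_congr h]
  have hS3 : μ3 {p : ℝ × (ℝ × ℝ) | p.2.1 = p.2.2} = 0 := by
    have hs : MeasurableSet {p : ℝ × (ℝ × ℝ) | p.2.1 = p.2.2} :=
      measurableSet_eq_fun (measurable_fst.comp measurable_snd)
        (measurable_snd.comp measurable_snd)
    rw [hμ3, Measure.prod_apply hs]
    have h : ∀ x : ℝ, (μ.prod μ) {a : ℝ × ℝ | a.1 = a.2} = 0 := fun _ => diag_null hatom
    simp [lintegral_congr h]
  have hae : ∀ᵐ p ∂μ3, p.1 ≠ p.2.1 ∧ p.1 ≠ p.2.2 ∧ p.2.1 ≠ p.2.2 := by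
    have h1 : ∀ᵐ p ∂μ3, ¬ ((p : ℝ × (ℝ × ℝ)).1 = p.2.1) := by rw [ae_iff]; simpa using hS1
    have h2 : ∀ᵐ p ∂μ3, ¬ ((p : ℝ × (ℝ × ℝ)).1 = p.2.2) := by rw [ae_iff]; simpa using hS2
    have h3 : ∀ᵐ p ∂μ3, ¬ ((p : ℝ × (ℝ × ℝ)).2.1 = p.2.2) := by rw [ae_iff]; simpa using hS3
    filter_upwards [h1, h2, h3] with p hp1 hp2 hp3
    exact ⟨hp1, hp2, hp3⟩
  have hsum : ∀ᵐ p ∂μ3, B p + B (τ p) + B (σ p) = 1 := by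
    filter_upwards [hae] with p hp
    obtain ⟨h12, h13, h23⟩ := hp
    dsimp [B, τ, σ]
    rcases lt_or_gt_of_ne h12 with a12 | a12 <;>
      rcases lt_or_gt_of_ne h13 with a13 | a13 <;>
        rcases lt_or_gt_of_ne h23 with a23 | a23 <;>
          split_ifs <;> (try norm_num) <;> linarith
  have hBi : Integrable B μ3 := hbound B hBm (hBb id)
  have hBτi : Integrable (fun p => B (τ p)) μ3 := hbound _ (hBm.comp hτm) (hBb τ)
  have hBσi : Integrable (fun p => B (σ p)) μ3 := hbound _ (hBm.comp hσm) (hBb σ)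
  have h1 : (∫ p, B p ∂μ3) + (∫ p, B (τ p) ∂μ3) + ∫ p, B (σ p) ∂μ3 = 1 := by
    have hBBτ : Integrable (fun p => B p + B (τ p)) μ3 := hBi.add hBτi
    rw [← integral_add hBi hBτi, ← integral_add hBBτ hBσi, integral_congr_ae hsum]
    simp
  have hgoal : ∫ p, B p ∂μ3 = 1/3 := by linarith
  exact hgoal

end aux

set_option maxHeartbeats 1000000 in
/-- Two-sample identity: for `X₁,…,Xₙ,Y₁,…,Y_m,T` i.i.d. from a distribution `μ`
on `ℝ` with continuous CDF, `E[(F_X(T) − F_Y(T))²] = (1/6)(1/n + 1/m)`.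
Here `Z (some (inl i)) = Xᵢ`, `Z (some (inr j)) = Yⱼ`, `Z none = T`. -/
theorem two_sample_cvm_continuous {Ω : Type*} [MeasurableSpace Ω]
    (P : Measure Ω) [IsProbabilityMeasure P]
    (μ : Measure ℝ) [IsProbabilityMeasure μ]
    (hcont : Continuous fun t => (μ (Set.Iic t)).toReal)
    (n m : ℕ) (hn : 0 < n) (hm : 0 < m)
    (Z : Option (Fin n ⊕ Fin m) → Ω → ℝ)
    (hmeas : ∀ i, Measurable (Z i))
    (hindep : iIndepFun Z P)
    (hlaw : ∀ i, Measure.map (Z i) P = μ) :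
    ∫ ω, ((∑ i : Fin n, (if Z (some (Sum.inl i)) ω ≤ Z none ω then (1:ℝ) else 0)) / n
        - (∑ j : Fin m, (if Z (some (Sum.inr j)) ω ≤ Z none ω then (1:ℝ) else 0)) / m) ^ 2 ∂P
      = (1 / 6) * (1 / n + 1 / m) := by
  classical
  have hatom : ∀ t : ℝ, μ {t} = 0 := aux_atomless hcont
  have hn' : (n : ℝ) ≠ 0 := Nat.cast_ne_zero.2 hn.ne'
  have hm' : (m : ℝ) ≠ 0 := Nat.cast_ne_zero.2 hm.ne'
  set e : Fin n ⊕ Fin m → Ω → ℝ :=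
    fun a ω => if Z (some a) ω ≤ Z none ω then 1 else 0 with he
  set c : Fin n ⊕ Fin m → ℝ := Sum.elim (fun _ => (1:ℝ)/n) (fun _ => -(1/m)) with hc
  have hem : ∀ a, Measurable (e a) := fun a =>
    Measurable.ite (measurableSet_le (hmeas _) (hmeas _)) measurable_const measurable_const
  have hint : ∀ a b, Integrable (fun ω => e a ω * e b ω) P := fun a b =>
    (integrable_const (1:ℝ)).mono' ((hem a).mul (hem b)).aestronglyMeasurable
      (Filter.Eventually.of_forall fun ω => by dsimp [e]; split_ifs <;> norm_num)
  have hKey : ∀ a b, ∫ ω, e a ω * e b ω ∂P = if a = b then 1/2 else 1/3 := by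
    intro a b
    by_cases hab : a = b
    · subst hab
      rw [if_pos rfl]
      have hsq : ∀ ω, e a ω * e a ω = e a ω := fun ω => by
        dsimp [e]; split_ifs <;> norm_num
      have hind : IndepFun (Z none) (Z (some a)) P := hindep.indepFun (by simp)
      have hmap : Measure.map (fun ω => (Z none ω, Z (some a) ω)) P = μ.prod μ := by
        rw [(indepFun_iff_map_prod_eq_prod_map_map (hmeas none).aemeasurable
          (hmeas (some a)).aemeasurable).mp hind, hlaw none, hlaw (some a)]
      have hgm : Measurable (fun p : ℝ × ℝ => if p.2 ≤ p.1 then (1:ℝ) else 0) :=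
        Measurable.ite (measurableSet_le measurable_snd measurable_fst) measurable_const
          measurable_const
      have h2 := int_two (μ := μ) hatom
      rw [← hmap, integral_map ((hmeas none).prodMk (hmeas (some a))).aemeasurable
        hgm.aestronglyMeasurable] at h2
      rw [integral_congr_ae (Filter.Eventually.of_forall fun ω => hsq ω)]
      exact h2
    · rw [if_neg hab]
      have hab' : (some a : Option (Fin n ⊕ Fin m)) ≠ some b := by simpa using hab
      have hW : Measure.map (fun ω => (Z (some a) ω, Z (some b) ω)) P = μ.prod μ := by
        rw [(indepFun_iff_map_prod_eq_prod_map_map (hmeas (some a)).aemeasurable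
          (hmeas (some b)).aemeasurable).mp (hindep.indepFun hab'), hlaw (some a),
          hlaw (some b)]
      have h2 : IndepFun (fun ω => (Z (some a) ω, Z (some b) ω)) (Z none) P :=
        hindep.indepFun_prodMk hmeas _ _ _ (by simp) (by simp)
      have hpm : Measurable (fun ω => (Z (some a) ω, Z (some b) ω)) :=
        (hmeas (some a)).prodMk (hmeas (some b))
      have hmap : Measure.map (fun ω => (Z none ω, (Z (some a) ω, Z (some b) ω))) P
          = μ.prod (μ.prod μ) := by
        rw [(indepFun_iff_map_prod_eq_prod_map_map (hmeas none).aemeasurable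
          hpm.aemeasurable).mp h2.symm, hlaw none, hW]
      have hBm : Measurable (fun p : ℝ × (ℝ × ℝ) =>
          (if p.2.1 ≤ p.1 then (1:ℝ) else 0) * (if p.2.2 ≤ p.1 then (1:ℝ) else 0)) := by
        apply Measurable.mul <;>
          exact Measurable.ite (measurableSet_le (by fun_prop) (by fun_prop)) measurable_const
            measurable_const
      have h3 := int_three (μ := μ) hatom
      rw [← hmap, integral_map ((hmeas none).prodMk hpm).aemeasurable
        hBm.aestronglyMeasurable] at h3
      exact h3
  have hfun : (fun ω =>
      ((∑ i : Fin n, (if Z (some (Sum.inl i)) ω ≤ Z none ω then (1:ℝ) else 0)) / n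
        - (∑ j : Fin m, (if Z (some (Sum.inr j)) ω ≤ Z none ω then (1:ℝ) else 0)) / m) ^ 2)
      = fun ω => ∑ a : Fin n ⊕ Fin m, ∑ b : Fin n ⊕ Fin m,
          (c a * c b) * (e a ω * e b ω) := by
    funext ω
    have h1 : ((∑ i : Fin n, e (Sum.inl i) ω) / n - (∑ j : Fin m, e (Sum.inr j) ω) / m)
        = ∑ a : Fin n ⊕ Fin m, c a * e a ω := by
      rw [Fintype.sum_sum_type]
      simp only [hc, Sum.elim_inl, Sum.elim_inr]
      rw [← Finset.mul_sum, ← Finset.mul_sum]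
      ring
    show ((∑ i : Fin n, e (Sum.inl i) ω) / n - (∑ j : Fin m, e (Sum.inr j) ω) / m) ^ 2 = _
    rw [h1, sq, Finset.sum_mul_sum]
    apply Finset.sum_congr rfl
    intro a _
    apply Finset.sum_congr rfl
    intro b _
    ring
  rw [hfun]
  rw [integral_finset_sum _ (fun a _ => integrable_finset_sum _
    (fun b _ => (hint a b).const_mul (c a * c b)))]
  have hsum1 : ∀ a, ∫ ω, (∑ b : Fin n ⊕ Fin m, (c a * c b) * (e a ω * e b ω)) ∂P
      = ∑ b : Fin n ⊕ Fin m, (c a * c b) * (if a = b then 1/2 else 1/3) := by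
    intro a
    rw [integral_finset_sum _ (fun b _ => (hint a b).const_mul (c a * c b))]
    exact Finset.sum_congr rfl fun b _ => by rw [integral_const_mul, hKey a b]
  rw [Finset.sum_congr rfl fun a _ => hsum1 a]
  have hstep : ∀ a b : Fin n ⊕ Fin m, (c a * c b) * (if a = b then (1:ℝ)/2 else 1/3)
      = c a * c b / 3 + (if a = b then c a * c b / 6 else 0) := by
    intro a b
    by_cases h : a = b <;> simp [h] <;> ring
  simp_rw [hstep, Finset.sum_add_distrib]
  have hsumc : ∑ a : Fin n ⊕ Fin m, c a = 0 := by
    rw [Fintype.sum_sum_type]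
    simp only [hc, Sum.elim_inl, Sum.elim_inr, Finset.sum_const, Finset.card_univ,
      Fintype.card_fin, nsmul_eq_mul]
    field_simp
    norm_num
  have hA : ∑ a : Fin n ⊕ Fin m, ∑ b : Fin n ⊕ Fin m, c a * c b / 3 = 0 := by
    have : ∑ a : Fin n ⊕ Fin m, ∑ b : Fin n ⊕ Fin m, c a * c b / 3
        = ((∑ a : Fin n ⊕ Fin m, c a) * (∑ b : Fin n ⊕ Fin m, c b)) / 3 := by
      rw [Finset.sum_mul_sum, Finset.sum_div]
      exact Finset.sum_congr rfl fun a _ => by rw [Finset.sum_div]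
    rw [this, hsumc, zero_mul, zero_div]
  have hB : ∑ a : Fin n ⊕ Fin m, (∑ b : Fin n ⊕ Fin m, if a = b then c a * c b / 6 else 0)
      = 1/6 * (1/n + 1/m) := by
    have h1 : ∀ a : Fin n ⊕ Fin m,
        (∑ b : Fin n ⊕ Fin m, if a = b then c a * c b / 6 else 0) = c a * c a / 6 := by
      intro a
      rw [Finset.sum_ite_eq]
      simp
    rw [Finset.sum_congr rfl fun a _ => h1 a, Fintype.sum_sum_type]
    simp only [hc, Sum.elim_inl, Sum.elim_inr, Finset.sum_const, Finset.card_univ,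
      Fintype.card_fin, nsmul_eq_mul]
    field_simp
  rw [hA, hB, zero_add]
end

section
/- For a ∈ ℝ and b > 0, ∫_{−∞}^{∞} Φ(a − b·x) φ(x) dx = Φ(a / √(1 + b²)), where Φ and φ are the standard normal CDF and PDF. -/
open MeasureTheory Real

/-- The standard normal density. -/
noncomputable def stdGaussPdf (s : ℝ) : ℝ :=
  Real.exp (-s ^ 2 / 2) / Real.sqrt (2 * Real.pi)

/-- The standard normal CDF. -/
noncomputable def stdGaussCdf (t : ℝ) : ℝ := ∫ s in Set.Iic t, stdGaussPdf s

lemma stdGaussPdf_nonneg (s : ℝ) : 0 ≤ stdGaussPdf s := by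
  unfold stdGaussPdf; positivity

lemma stdGaussPdf_cont : Continuous stdGaussPdf := by
  unfold stdGaussPdf
  exact (Real.continuous_exp.comp (by continuity)).div_const _

lemma stdGaussPdf_eq (s : ℝ) : stdGaussPdf s = Real.exp (-(1/2) * s ^ 2) / Real.sqrt (2 * Real.pi) := by
  unfold stdGaussPdf; ring_nf

lemma stdGaussPdf_integrable : Integrable stdGaussPdf := by
  have : Integrable (fun s : ℝ => Real.exp (-(1/2) * s ^ 2)) :=
    integrable_exp_neg_mul_sq (by norm_num)
  have h := this.div_const (Real.sqrt (2 * Real.pi))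
  refine h.congr ?_
  filter_upwards with s
  rw [stdGaussPdf_eq]

lemma stdGaussPdf_integral : ∫ s, stdGaussPdf s = 1 := by
  simp_rw [stdGaussPdf_eq]
  rw [integral_div, integral_gaussian]
  rw [div_eq_one_iff_eq (by positivity)]
  congr 1
  rw [div_div_eq_mul_div, mul_comm]
  norm_num

lemma setIntegral_Iic_comp_sub (f : ℝ → ℝ) (a c : ℝ) :
    ∫ u in Set.Iic a, f (u - c) = ∫ s in Set.Iic (a - c), f s := by
  rw [← integral_indicator measurableSet_Iic, ← integral_indicator measurableSet_Iic]
  rw [← integral_sub_right_eq_self (fun s => (Set.Iic (a - c)).indicator f s) c]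
  congr 1
  ext u
  by_cases h : u ≤ a
  · simp [Set.indicator, h, sub_le_sub_iff_right]
  · simp [Set.indicator, h, sub_le_sub_iff_right]

lemma setIntegral_Iic_comp_div (f : ℝ → ℝ) (a c : ℝ) (hc : 0 < c) :
    ∫ u in Set.Iic a, f (u / c) = c * ∫ s in Set.Iic (a / c), f s := by
  rw [← integral_indicator measurableSet_Iic, ← integral_indicator measurableSet_Iic]
  have h1 : (fun u => (Set.Iic a).indicator (fun u => f (u / c)) u)
      = fun u => (Set.Iic (a / c)).indicator f (u / c) := by
    ext u
    by_cases h : u ≤ a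
    · simp [Set.indicator, h, div_le_div_iff_of_pos_right hc, ]
    · simp [Set.indicator, h, div_le_div_iff_of_pos_right hc, ]
  rw [h1, MeasureTheory.Measure.integral_comp_div (fun s => (Set.Iic (a / c)).indicator f s) c,
    abs_of_pos hc, smul_eq_mul]

lemma inner_int (b : ℝ) (hb : 0 < b) (u : ℝ) :
    ∫ x, stdGaussPdf (u - b * x) * stdGaussPdf x
      = stdGaussPdf (u / Real.sqrt (1 + b ^ 2)) / Real.sqrt (1 + b ^ 2) := by
  set c : ℝ := Real.sqrt (1 + b ^ 2) with hc_def
  have hc : 0 < c := Real.sqrt_pos.mpr (by positivity)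
  have hc2 : c ^ 2 = 1 + b ^ 2 := Real.sq_sqrt (by positivity)
  have hpi : (0:ℝ) < Real.pi := Real.pi_pos
  have key : ∀ x, stdGaussPdf (u - b * x) * stdGaussPdf x
      = (Real.exp (-(u ^ 2) / (2 * c ^ 2)) / (2 * Real.pi))
        * Real.exp (-(c ^ 2 / 2) * (x - u * b / c ^ 2) ^ 2) := by
    intro x
    unfold stdGaussPdf
    rw [div_mul_div_comm, ← Real.exp_add,
      Real.mul_self_sqrt (by positivity : (0:ℝ) ≤ 2 * Real.pi),
      div_mul_eq_mul_div, ← Real.exp_add]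
    congr 1
    have h1 : (1:ℝ) + b ^ 2 ≠ 0 := by positivity
    rw [hc2]
    congr 1
    field_simp
    ring
  simp_rw [key]
  rw [integral_const_mul,
    integral_sub_right_eq_self (fun x => Real.exp (-(c ^ 2 / 2) * x ^ 2)) (u * b / c ^ 2),
    integral_gaussian]
  have hs : Real.sqrt (Real.pi / (c ^ 2 / 2)) = Real.sqrt (2 * Real.pi) / c := by
    rw [div_div_eq_mul_div, mul_comm, ← Real.sqrt_sq hc.le, ← Real.sqrt_div (by positivity)]
    congr 1
    rw [Real.sq_sqrt (sq_nonneg c)]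
  rw [hs]
  unfold stdGaussPdf
  rw [div_pow]
  have he : -u ^ 2 / (2 * c ^ 2) = -(u ^ 2 / c ^ 2) / 2 := by ring
  rw [he]
  have h2 : Real.sqrt (2 * Real.pi) * Real.sqrt (2 * Real.pi) = 2 * Real.pi :=
    Real.mul_self_sqrt (by positivity)
  have h3 : Real.sqrt (2 * Real.pi) ≠ 0 := by positivity
  set sp := Real.sqrt (2 * Real.pi) with hsp
  field_simp
  have hee : Real.exp (-u ^ 2 / (c ^ 2 * 2)) = Real.exp (-(u ^ 2 / c ^ 2) / 2) := by
    congr 1; ring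
  linear_combination (sp ^ 2 - 2 * Real.pi) * c * hee + c * Real.exp (-(u ^ 2 / c ^ 2) / 2) * h2 + (1 - c * Real.exp (-u ^ 2 / (c ^ 2 * 2))) * h2

/-- Gaussian smoothing identity:
`∫ Φ(a − b·x) φ(x) dx = Φ(a / √(1 + b²))`. -/
theorem gaussian_cdf_smoothing (a b : ℝ) (hb : 0 < b) :
    ∫ x, stdGaussCdf (a - b * x) * stdGaussPdf x
      = stdGaussCdf (a / Real.sqrt (1 + b ^ 2)) := by
  set c : ℝ := Real.sqrt (1 + b ^ 2) with hc_def
  have hc : 0 < c := Real.sqrt_pos.mpr (by positivity)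
  have h1 : ∀ x, stdGaussCdf (a - b * x) * stdGaussPdf x
      = ∫ u in Set.Iic a, stdGaussPdf (u - b * x) * stdGaussPdf x := by
    intro x
    rw [stdGaussCdf, ← setIntegral_Iic_comp_sub stdGaussPdf a (b * x), ← integral_mul_const]
  simp_rw [h1]
  have hF : Continuous (fun p : ℝ × ℝ => stdGaussPdf (p.2 - b * p.1) * stdGaussPdf p.1) := by
    exact (stdGaussPdf_cont.comp (by continuity)).mul (stdGaussPdf_cont.comp continuous_fst)
  have hint : Integrable (fun p : ℝ × ℝ => stdGaussPdf (p.2 - b * p.1) * stdGaussPdf p.1)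
      (volume.prod (volume.restrict (Set.Iic a))) := by
    rw [integrable_prod_iff hF.aestronglyMeasurable]
    constructor
    · filter_upwards with x
      exact ((stdGaussPdf_integrable.comp_sub_right (b * x)).restrict).mul_const _
    · apply Integrable.mono' stdGaussPdf_integrable
      · exact hF.aestronglyMeasurable.norm.integral_prod_right'
      · filter_upwards with x
        have hnn : 0 ≤ ∫ u in Set.Iic a, ‖stdGaussPdf (u - b * x) * stdGaussPdf x‖ :=
          integral_nonneg fun u => norm_nonneg _
        rw [Real.norm_of_nonneg hnn]
        have heq : ∫ u in Set.Iic a, ‖stdGaussPdf (u - b * x) * stdGaussPdf x‖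
            = (∫ u in Set.Iic a, stdGaussPdf (u - b * x)) * stdGaussPdf x := by
          simp_rw [norm_mul, Real.norm_of_nonneg (stdGaussPdf_nonneg _)]
          rw [integral_mul_const]
        rw [heq]
        have hle : ∫ u in Set.Iic a, stdGaussPdf (u - b * x) ≤ 1 := by
          have := setIntegral_le_integral (s := Set.Iic a)
            (stdGaussPdf_integrable.comp_sub_right (b * x))
            (Filter.Eventually.of_forall fun u => stdGaussPdf_nonneg _)
          rw [integral_sub_right_eq_self (μ := volume) stdGaussPdf (b * x), stdGaussPdf_integral] at this
          exact this
        calc (∫ u in Set.Iic a, stdGaussPdf (u - b * x)) * stdGaussPdf x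
            ≤ 1 * stdGaussPdf x := by
              exact mul_le_mul_of_nonneg_right hle (stdGaussPdf_nonneg x)
          _ = stdGaussPdf x := one_mul _
  rw [integral_integral_swap hint]
  simp_rw [inner_int b hb]
  rw [integral_div, setIntegral_Iic_comp_div stdGaussPdf a c hc,
    mul_div_cancel_left₀ _ hc.ne', stdGaussCdf]
end
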